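/- For w ≥ 1, k ≥ 0, the operator J^{w+k}(k) on the degree-one subspace of gr(S(ℂ)) (with basis β_l, γ_l, l ≥ 0, where β_l and γ_l are images of ∂^l β(z) and ∂^l γ(z)) acts by J^{w+k}(k)(β_l) = λ^w_{k,l} β_{l+w} and J^{w+k}(k)(γ_l) = μ^w_{k,l} γ_{l+w}, where λ^w_{k,l} = −l!/(l−k)! if l ≥ k and 0 otherwise, and μ^w_{k,l} = (−1)^{w+k}(w+k+l)!/(l+w)!. -/

import Mathlib

/-- Generalized binomial coefficient `C(m, l) = m(m−1)⋯(m−l+1)/l!` for `m ∈ ℤ`. -/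
noncomputable def zc (m : ℤ) (l : ℕ) : ℂ :=
  (∏ i ∈ Finset.range l, ((m : ℂ) - (i : ℂ))) / (l.factorial : ℂ)

/-- The Koszul sign `(−1)^{|a||b|}` for parities `i, j ∈ ℤ/2`. -/
noncomputable def sgn (i j : ZMod 2) : ℂ := (-1 : ℂ) ^ ((i * j).val)

/-- A vertex superalgebra: a `ℤ/2`-graded `ℂ`-vector space with `ℤ`-indexed circle products
`∘_n`, a vacuum vector, a translation operator, satisfying truncation, vacuum, translation,
grading axioms and the Borcherds identity (with Koszul signs). The Wick product is
`:ab: = a ∘_{−1} b`. -/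
class VertexSuperAlg (V : Type) [AddCommGroup V] [Module ℂ V] where
  pr : ℤ → V →ₗ[ℂ] V →ₗ[ℂ] V
  vac : V
  T : Module.End ℂ V
  deg : ZMod 2 → Submodule ℂ V
  grading : ∀ v : V, ∃ v0 ∈ deg 0, ∃ v1 ∈ deg 1, v = v0 + v1
  vac_deg : vac ∈ deg 0
  pr_deg : ∀ (i j : ZMod 2) (n : ℤ) (a b : V), a ∈ deg i → b ∈ deg j → pr n a b ∈ deg (i + j)
  T_deg : ∀ (i : ZMod 2) (a : V), a ∈ deg i → T a ∈ deg i
  trunc : ∀ a b : V, ∃ N : ℕ, ∀ n : ℕ, N ≤ n → pr (n : ℤ) a b = 0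
  vac_left : ∀ (n : ℤ) (a : V), pr n vac a = if n = -1 then a else 0
  create : ∀ (a : V) (n : ℤ), 0 ≤ n → pr n a vac = 0
  create_neg_one : ∀ a : V, pr (-1) a vac = a
  T_def : ∀ a : V, T a = pr (-2) a vac
  T_deriv : ∀ (a b : V) (n : ℤ), pr n (T a) b = (-n : ℂ) • pr (n - 1) a b
  borcherds : ∀ (i j : ZMod 2) (a b c : V), a ∈ deg i → b ∈ deg j → ∀ m n k : ℤ,
    (∑ᶠ l : ℕ, zc m l • pr (m + k - l) (pr (n + l) a b) c)
      = ∑ᶠ l : ℕ, ((-1 : ℂ) ^ l * zc n l) •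
          (pr (m + n - l) a (pr (k + l) b c)
            - (sgn i j * (-1 : ℂ) ^ n) • pr (n + k - l) b (pr (m + l) a c))

open VertexSuperAlg

/-- `λ^w_{k,l} = −l!/(l−k)!` if `l ≥ k`, else `0`. -/
noncomputable def lam (k l : ℕ) : ℂ :=
  if k ≤ l then -((l.factorial : ℂ) / ((l - k).factorial : ℂ)) else 0

/-- `μ^w_{k,l} = (−1)^{w+k}(w+k+l)!/(l+w)!`. -/
noncomputable def mu (w k l : ℕ) : ℂ :=
  (-1 : ℂ) ^ (w + k) * ((w + k + l).factorial : ℂ) / ((l + w).factorial : ℂ)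

/-!
The mode `J(k)` of `J = :γ ∂^{w+k}β:` kills the vacuum, and `∂^l x = l! x_{(-l-1)} 1`, so the
commutator formula gives `J(k) ∂^l x = l! ∑_j C(k,j) (J(j) x)_{(k-l-1-j)} 1`. The Wick formula
yields `J(j) β = -δ_{j0} ∂^{w+k} β` and `J(j) γ = (-1)^{w+k} (w+k)!/(w+k-j)! ∂^{w+k-j} γ`, and
`(∂^q x)_{(q-L-1)} 1 = ∂^L x/(L-q)!` (zero for `q > L`). Every term is thus a multiple of
`∂^{l+w} x`, with no vacuum component; for `γ` the coefficients add up by Vandermonde's identity.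
-/
theorem zc_eq_ringChoose (m : ℤ) (l : ℕ) : zc m l = (Ring.choose m l : ℤ) := by
  rw [zc, div_eq_iff (Nat.cast_ne_zero.2 l.factorial_ne_zero),
    ← descPochhammer_eval_eq_prod_range, ← descPochhammer_eval_cast, Polynomial.eval_eq_smeval,
    Ring.descPochhammer_eq_factorial_smul_choose, nsmul_eq_mul, Int.cast_mul, mul_comm]
  norm_cast

theorem zc_zero_right (m : ℤ) : zc m 0 = 1 := by
  simp [zc]

theorem zc_zero_left {l : ℕ} (hl : l ≠ 0) : zc 0 l = 0 := by
  rw [zc_eq_ringChoose, Ring.choose_zero_pos ℤ (Nat.pos_of_ne_zero hl), Int.cast_zero]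

theorem zc_natCast (n l : ℕ) : zc n l = n.choose l := by
  rw [zc_eq_ringChoose, Ring.choose_natCast, Int.cast_natCast]

theorem zc_neg_one (l : ℕ) : zc (-1) l = (-1) ^ l := by
  rw [zc_eq_ringChoose, Ring.choose_neg, add_sub_cancel_left, Ring.choose_natCast,
    Nat.choose_self]
  simp [Units.smul_def, Int.coe_negOnePow_natCast]

theorem sgn_zero_left (j : ZMod 2) : sgn 0 j = 1 := by
  simp [sgn]

theorem factorial_mul_sum_choose_mul_choose_eq_mu (w k l : ℕ) :
    (l.factorial : ℂ) * ∑ s ∈ Finset.range (w + k + 1),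
        (-1) ^ (w + k) * ((w + k).factorial : ℂ) / ((l + w).factorial : ℂ)
          * (k.choose s * (l + w).choose (w + k - s)) = mu w k l := by
  have vandermonde :
      ∑ s ∈ Finset.range (w + k + 1), (k.choose s * (l + w).choose (w + k - s) : ℂ)
        = ((w + k + l).choose (w + k) : ℂ) := by
    rw [show w + k + l = k + (l + w) by ring, Nat.add_choose_eq,
      Finset.Nat.sum_antidiagonal_eq_sum_range_succ_mk]
    push_cast
    rfl
  have hfac : ((w + k + l).choose (w + k) : ℂ) * (w + k).factorial * l.factorial
      = (w + k + l).factorial := by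
    have h := Nat.choose_mul_factorial_mul_factorial (Nat.le_add_right (w + k) l)
    rw [Nat.add_sub_cancel_left] at h
    exact_mod_cast h
  have hL : ((l + w).factorial : ℂ) ≠ 0 := Nat.cast_ne_zero.2 (Nat.factorial_ne_zero _)
  rw [← Finset.mul_sum, vandermonde, mu]
  field_simp
  linear_combination hfac

section VertexSuperAlg

variable {V : Type} [AddCommGroup V] [Module ℂ V] [VertexSuperAlg V]

theorem T_pow_mem_deg {i : ZMod 2} {a : V} (ha : a ∈ deg i) (p : ℕ) : (T ^ p) a ∈ deg i := by
  induction p with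
  | zero => simpa using ha
  | succ p ih => rw [pow_succ', Module.End.mul_apply]; exact T_deg i _ ih

theorem T_pow_eq_factorial_smul_pr_vac (l : ℕ) (x : V) :
    (T ^ l) x = (l.factorial : ℂ) • pr (-(l : ℤ) - 1) x vac := by
  induction l generalizing x with
  | zero => simp [create_neg_one]
  | succ l ih =>
    rw [pow_succ, Module.End.mul_apply, ih, T_deriv, smul_smul,
      show -(l : ℤ) - 1 - 1 = -((l + 1 : ℕ) : ℤ) - 1 by push_cast; ring]
    congr 1
    push_cast [Nat.factorial_succ]
    ring

theorem pr_neg_sub_one_vac (N : ℕ) (x : V) :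
    pr (-(N : ℤ) - 1) x vac = ((N.factorial : ℂ))⁻¹ • (T ^ N) x := by
  rw [T_pow_eq_factorial_smul_pr_vac N x, smul_smul,
    inv_mul_cancel₀ (Nat.cast_ne_zero.2 N.factorial_ne_zero), one_smul]

theorem pr_sub_sub_one_T_pow_vac (q L : ℕ) (x : V) :
    pr ((q : ℤ) - L - 1) ((T ^ q) x) vac
      = (if q ≤ L then (((L - q).factorial : ℂ))⁻¹ else 0) • (T ^ L) x := by
  split_ifs with hqL
  · rw [show (q : ℤ) - L - 1 = -((L - q : ℕ) : ℤ) - 1 by push_cast [hqL]; ring,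
      pr_neg_sub_one_vac, ← Module.End.mul_apply, ← pow_add, Nat.sub_add_cancel hqL]
  · rw [zero_smul, create _ _ (by omega)]

theorem pr_T_pow_left_natCast {a b : V} (hab : ∀ m : ℤ, 1 ≤ m → pr m a b = 0) (p n : ℕ) :
    pr n ((T ^ p) a) b = (if n = p then (-1) ^ p * (p.factorial : ℂ) else 0) • pr 0 a b := by
  induction p generalizing n with
  | zero =>
    rcases n with _ | n
    · simp
    · rw [if_neg n.succ_ne_zero, zero_smul, pow_zero, Module.End.one_apply, hab _ (by omega)]
  | succ p ih =>
    rw [pow_succ', Module.End.mul_apply, T_deriv]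
    rcases n with _ | n
    · simp
    · rw [show ((n + 1 : ℕ) : ℤ) - 1 = n by push_cast; ring, ih, smul_smul]
      congr 1
      simp only [add_left_inj]
      split_ifs with hnp
      · subst hnp; push_cast [Nat.factorial_succ]; ring
      · simp

theorem commutator_formula {i j : ZMod 2} {a b : V} (ha : a ∈ deg i) (hb : b ∈ deg j)
    (M K : ℤ) (c : V) :
    pr M a (pr K b c) - sgn i j • pr K b (pr M a c)
      = ∑ᶠ s : ℕ, zc M s • pr (M + K - s) (pr s a b) c := by
  have h := borcherds i j a b c ha hb M 0 K
  conv_rhs at h =>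
    rw [finsum_eq_single _ 0 fun s hs => by rw [zc_zero_left hs, mul_zero, zero_smul]]
  simp only [zero_add, add_zero, sub_zero, Nat.cast_zero, pow_zero, zpow_zero, mul_one,
    zc_zero_right, one_smul] at h
  exact h.symm

theorem wick_formula {i j : ZMod 2} {a b : V} (ha : a ∈ deg i) (hb : b ∈ deg j) (K : ℤ) (c : V) :
    pr K (pr (-1) a b) c
      = ∑ᶠ s : ℕ, (pr (-1 - s) a (pr (K + s) b c) + sgn i j • pr (K - 1 - s) b (pr s a c)) := by
  have h := borcherds i j a b c ha hb 0 (-1) K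
  rw [finsum_eq_single _ 0 fun s hs => by rw [zc_zero_left hs, zero_smul]] at h
  simp only [zc_zero_right, one_smul, zero_add, Nat.cast_zero, add_zero, sub_zero] at h
  rw [h]
  refine finsum_congr fun s => ?_
  rw [zc_neg_one, ← mul_pow, neg_one_mul, neg_neg, one_pow, one_smul, zpow_neg_one, inv_neg_one,
    mul_neg_one, neg_smul, sub_neg_eq_add, show -1 + K - s = K - 1 - s by ring]

theorem pr_natCast_T_pow {i j : ZMod 2} {a x : V} (ha : a ∈ deg i) (hx : x ∈ deg j) (m l : ℕ) :
    pr m a ((T ^ l) x)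
      = (l.factorial : ℂ) • ∑ᶠ s : ℕ, zc m s • pr ((m : ℤ) - l - 1 - s) (pr s a x) vac := by
  have h := commutator_formula ha hx m (-(l : ℤ) - 1) vac
  rw [create a m (by positivity), map_zero, smul_zero, sub_zero] at h
  rw [T_pow_eq_factorial_smul_pr_vac, map_smul, h]
  congr 1
  refine finsum_congr fun s => ?_
  rw [show (m : ℤ) + (-(l : ℤ) - 1) - s = m - l - 1 - s by ring]

variable {β γ : V}

theorem pr_natCast_wick_β (hβ : β ∈ deg 0) (hγ : γ ∈ deg 0) (hγβ0 : pr 0 γ β = -vac)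
    (hγβpos : ∀ m : ℤ, 1 ≤ m → pr m γ β = 0) (hββ : ∀ m : ℤ, 0 ≤ m → pr m β β = 0) (p s : ℕ) :
    pr s (pr (-1) γ ((T ^ p) β)) β = if s = 0 then -((T ^ p) β) else 0 := by
  have hTββ (n : ℕ) : pr n ((T ^ p) β) β = 0 := by
    rw [pr_T_pow_left_natCast (fun m hm => hββ m (by omega)), hββ 0 le_rfl, smul_zero]
  rw [wick_formula hγ (T_pow_mem_deg hβ p), finsum_eq_single _ 0 fun i hi => by
    rw [← Nat.cast_add, hTββ, map_zero, hγβpos i (by omega), map_zero, smul_zero, add_zero]]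
  rw [← Nat.cast_add, hTββ, map_zero, zero_add, sgn_zero_left, one_smul, Nat.cast_zero, hγβ0,
    map_neg, sub_zero]
  split_ifs with hs
  · rw [hs, Nat.cast_zero, zero_sub, create_neg_one]
  · rw [create _ _ (by omega), neg_zero]

theorem pr_natCast_wick_γ (hβ : β ∈ deg 0) (hγ : γ ∈ deg 0) (hβγ0 : pr 0 β γ = vac)
    (hβγpos : ∀ m : ℤ, 1 ≤ m → pr m β γ = 0) (hγγ : ∀ m : ℤ, 0 ≤ m → pr m γ γ = 0) {p s : ℕ}
    (hs : s ≤ p) :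
    pr s (pr (-1) γ ((T ^ p) β)) γ
      = ((-1) ^ p * (p.factorial : ℂ) / ((p - s).factorial : ℂ)) • (T ^ (p - s)) γ := by
  rw [wick_formula hγ (T_pow_mem_deg hβ p), finsum_eq_single _ (p - s) fun i hi => by
    rw [← Nat.cast_add, pr_T_pow_left_natCast hβγpos, if_neg (by omega), zero_smul, map_zero,
      zero_add, hγγ i (by omega), map_zero, smul_zero]]
  rw [← Nat.cast_add, pr_T_pow_left_natCast hβγpos, if_pos (by omega), hγγ _ (by omega),
    map_zero, smul_zero, add_zero, hβγ0, map_smul,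
    show (-1 : ℤ) - (p - s : ℕ) = -((p - s : ℕ) : ℤ) - 1 by ring, pr_neg_sub_one_vac, smul_smul,
    div_eq_mul_inv]

theorem wick_mem_deg_zero (hβ : β ∈ deg 0) (hγ : γ ∈ deg 0) (p : ℕ) :
    pr (-1) γ ((T ^ p) β) ∈ deg 0 := by
  simpa using pr_deg 0 0 (-1) γ _ hγ (T_pow_mem_deg hβ p)

theorem pr_natCast_wick_T_pow_β (hβ : β ∈ deg 0) (hγ : γ ∈ deg 0) (hγβ0 : pr 0 γ β = -vac)
    (hγβpos : ∀ m : ℤ, 1 ≤ m → pr m γ β = 0) (hββ : ∀ m : ℤ, 0 ≤ m → pr m β β = 0) (w k l : ℕ) :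
    pr k (pr (-1) γ ((T ^ (w + k)) β)) ((T ^ l) β) = lam k l • (T ^ (l + w)) β := by
  rw [pr_natCast_T_pow (wick_mem_deg_zero hβ hγ _) hβ,
    finsum_eq_single _ 0 fun s hs => by
      rw [pr_natCast_wick_β hβ hγ hγβ0 hγβpos hββ, if_neg hs, map_zero, LinearMap.zero_apply,
        smul_zero]]
  rw [pr_natCast_wick_β hβ hγ hγβ0 hγβpos hββ, if_pos rfl, zc_zero_right, one_smul, map_neg,
    LinearMap.neg_apply, Nat.cast_zero, sub_zero,
    show (k : ℤ) - l - 1 = ((w + k : ℕ) : ℤ) - (l + w : ℕ) - 1 by push_cast; ring,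
    pr_sub_sub_one_T_pow_vac, smul_neg, smul_smul, ← neg_smul, lam]
  congr 1
  split_ifs with hle hkl hkl
  · rw [show l + w - (w + k) = l - k by omega, div_eq_mul_inv]
  · omega
  · omega
  · simp

theorem zc_smul_pr_pr_natCast_wick_γ_vac (hβ : β ∈ deg 0) (hγ : γ ∈ deg 0) (hβγ0 : pr 0 β γ = vac)
    (hβγpos : ∀ m : ℤ, 1 ≤ m → pr m β γ = 0) (hγγ : ∀ m : ℤ, 0 ≤ m → pr m γ γ = 0)
    (w k l : ℕ) {s : ℕ} (hs : s ≤ w + k) :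
    zc k s • pr ((k : ℤ) - l - 1 - s) (pr s (pr (-1) γ ((T ^ (w + k)) β)) γ) vac
      = ((-1) ^ (w + k) * ((w + k).factorial : ℂ) / ((l + w).factorial : ℂ)
          * (k.choose s * (l + w).choose (w + k - s))) • (T ^ (l + w)) γ := by
  rw [pr_natCast_wick_γ hβ hγ hβγ0 hβγpos hγγ hs, map_smul, LinearMap.smul_apply,
    show (k : ℤ) - l - 1 - s = ((w + k - s : ℕ) : ℤ) - (l + w : ℕ) - 1 by push_cast [hs]; ring,
    pr_sub_sub_one_T_pow_vac, smul_smul, smul_smul, zc_natCast]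
  congr 1
  split_ifs with h
  · have hL : ((l + w).factorial : ℂ) ≠ 0 := Nat.cast_ne_zero.2 (Nat.factorial_ne_zero _)
    rw [Nat.cast_choose ℂ h]
    field_simp
  · rw [Nat.choose_eq_zero_of_lt (not_le.1 h)]
    simp

theorem pr_natCast_wick_T_pow_γ (hβ : β ∈ deg 0) (hγ : γ ∈ deg 0) (hβγ0 : pr 0 β γ = vac)
    (hβγpos : ∀ m : ℤ, 1 ≤ m → pr m β γ = 0) (hγγ : ∀ m : ℤ, 0 ≤ m → pr m γ γ = 0) (w k l : ℕ) :
    pr k (pr (-1) γ ((T ^ (w + k)) β)) ((T ^ l) γ) = mu w k l • (T ^ (l + w)) γ := by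
  rw [pr_natCast_T_pow (wick_mem_deg_zero hβ hγ _) hγ,
    finsum_eq_sum_of_support_subset _ (s := Finset.range (w + k + 1)) fun s hs => ?_]
  · rw [Finset.sum_congr rfl fun s hs => zc_smul_pr_pr_natCast_wick_γ_vac hβ hγ hβγ0 hβγpos hγγ
      w k l (Nat.lt_succ_iff.1 (Finset.mem_range.1 hs)), ← Finset.sum_smul, smul_smul,
      factorial_mul_sum_choose_mul_choose_eq_mu]
  · rw [Finset.coe_range, Set.mem_Iio]
    by_contra h
    rw [Function.mem_support, zc_natCast, Nat.choose_eq_zero_of_lt (by omega), Nat.cast_zero,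
      zero_smul] at hs
    exact hs rfl

end VertexSuperAlg

/-- `J^l(k)` is the mode `pr k` of `J^l = pr (-1) γ (T ^ l β)`; an equality up to a multiple of
`vac` is an equality in the degree-one part of `gr S(ℂ)`. -/
theorem mode_action_on_gr_degree_one_general (S : Type) [AddCommGroup S] [Module ℂ S]
    [VertexSuperAlg S] (β γ : S)
    (hβdeg : β ∈ deg (V := S) 0) (hγdeg : γ ∈ deg (V := S) 0)
    (hβγ0 : pr 0 β γ = (vac : S))
    (hβγpos : ∀ m : ℤ, 1 ≤ m → pr m β γ = 0)
    (hγβ0 : pr 0 γ β = -(vac : S))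
    (hγβpos : ∀ m : ℤ, 1 ≤ m → pr m γ β = 0)
    (hββ : ∀ m : ℤ, 0 ≤ m → pr m β β = 0)
    (hγγ : ∀ m : ℤ, 0 ≤ m → pr m γ γ = 0)
    (w k : ℕ) (l : ℕ) :
    (∃ c : ℂ, pr (k : ℤ) (pr (-1) γ ((T ^ (w + k)) β)) ((T ^ l) β)
        = lam k l • (T ^ (l + w)) β + c • (vac : S)) ∧
    (∃ c : ℂ, pr (k : ℤ) (pr (-1) γ ((T ^ (w + k)) β)) ((T ^ l) γ)
        = mu w k l • (T ^ (l + w)) γ + c • (vac : S)) := by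
  refine ⟨⟨0, ?_⟩, ⟨0, ?_⟩⟩ <;> rw [zero_smul, add_zero]
  · exact pr_natCast_wick_T_pow_β hβdeg hγdeg hγβ0 hγβpos hββ w k l
  · exact pr_natCast_wick_T_pow_γ hβdeg hγdeg hβγ0 hβγpos hγγ w k l

/-- In the rank-one `βγ`-system `S(ℂ)` — an (even) vertex algebra with generators `β, γ`
satisfying `β ∘_0 γ = 1`, `γ ∘_0 β = −1`, all other nonnegative products of generators
vanishing — let `J^l = :γ ∂^l β:` and let `J^l(k)` denote the mode acting as `J^l ∘_k`.
For `w ≥ 1` and `k ≥ 0`, the weight-`w` mode `J^{w+k}(k)` acts on the degree-one part of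
`gr(S(ℂ))` (spanned by the classes `β_l, γ_l` of `∂^l β, ∂^l γ` modulo the degree-zero
piece `ℂ·vac`) by `β_l ↦ λ^w_{k,l} β_{l+w}` and `γ_l ↦ μ^w_{k,l} γ_{l+w}`. -/
theorem mode_action_on_gr_degree_one (S : Type) [AddCommGroup S] [Module ℂ S]
    [VertexSuperAlg S] (β γ : S)
    (hβdeg : β ∈ deg (V := S) 0) (hγdeg : γ ∈ deg (V := S) 0)
    (hβγ0 : pr 0 β γ = (vac : S))
    (hβγpos : ∀ m : ℤ, 1 ≤ m → pr m β γ = 0)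
    (hγβ0 : pr 0 γ β = -(vac : S))
    (hγβpos : ∀ m : ℤ, 1 ≤ m → pr m γ β = 0)
    (hββ : ∀ m : ℤ, 0 ≤ m → pr m β β = 0)
    (hγγ : ∀ m : ℤ, 0 ≤ m → pr m γ γ = 0)
    (w k : ℕ) (hw : 1 ≤ w) (l : ℕ) :
    (∃ c : ℂ, pr (k : ℤ) (pr (-1) γ ((T ^ (w + k)) β)) ((T ^ l) β)
        = lam k l • (T ^ (l + w)) β + c • (vac : S)) ∧
    (∃ c : ℂ, pr (k : ℤ) (pr (-1) γ ((T ^ (w + k)) β)) ((T ^ l) γ)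
        = mu w k l • (T ^ (l + w)) γ + c • (vac : S)) :=
  mode_action_on_gr_degree_one_general S β γ hβdeg hγdeg hβγ0 hβγpos hγβ0 hγβpos hββ hγγ w k l
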